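/- arXiv:1508.02749 — 5 statements merged into one kernel-verified Lean document; each statement's English description precedes it below -/
import Mathlib

section
/- Let U be a random vector in [0,1]^d with distribution C having uniform margins (a copula), let F_1,…,F_d be distribution functions on ℝ, and set X = (F_1^←(U_1),…,F_d^←(U_d)). Then for every t ∈ ℝ, P(X_1 + … + X_d ≤ t) = C-measure of the lower layer ⟨T(A_t)⟩, where T(x) = (F_1(x_1),…,F_d(x_d)), A_t = {x : ∑ x_i ≤ t}, and ⟨B⟩ = ⋃_{u∈B}[0,u]. -/
open Set MeasureTheory Filter Topology

/-- Generalized inverse (quantile function): `F⁻¹(y) = inf {t : F t ≥ y}`. -/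
noncomputable def quantile (F : ℝ → ℝ) (y : ℝ) : ℝ := sInf {t | y ≤ F t}

/-- Lower layer `⟨B⟩ = ⋃_{u ∈ B} [0, u]`. -/
def lowerLayer {d : ℕ} (B : Set (Fin d → ℝ)) : Set (Fin d → ℝ) := ⋃ u ∈ B, Set.Icc 0 u

/-- The set `A_t = {x ∈ ℝ^d : ∑ x_i ≤ t}`. -/
def sumLev (d : ℕ) (t : ℝ) : Set (Fin d → ℝ) := {x | ∑ i, x i ≤ t}

/-- A (cumulative) distribution function on ℝ. -/
def IsDistFun (F : ℝ → ℝ) : Prop :=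
  Monotone F ∧ (∀ x, ContinuousWithinAt F (Set.Ici x) x) ∧
  (∀ t, F t ∈ Set.Icc (0:ℝ) 1) ∧
  Filter.Tendsto F Filter.atBot (nhds 0) ∧ Filter.Tendsto F Filter.atTop (nhds 1)

lemma bddBelow_aux {F : ℝ → ℝ} (hF : IsDistFun F) {y : ℝ} (hy : 0 < y) :
    BddBelow {t | y ≤ F t} := by
  obtain ⟨b, hb⟩ := Filter.eventually_atBot.mp (hF.2.2.2.1.eventually (gt_mem_nhds hy))
  refine ⟨b, fun s hs => ?_⟩
  by_contra hlt
  exact absurd hs.out (not_le.mpr (hb s (le_of_not_ge hlt)))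

lemma quantile_le {F : ℝ → ℝ} (hF : IsDistFun F) {y x : ℝ} (hy : 0 < y) (h : y ≤ F x) :
    quantile F y ≤ x := csInf_le (bddBelow_aux hF hy) h

lemma le_apply_quantile {F : ℝ → ℝ} (hF : IsDistFun F) {y : ℝ} (hy0 : 0 < y) (hy1 : y < 1) :
    y ≤ F (quantile F y) := by
  set s : Set ℝ := {t | y ≤ F t} with hs
  have hne : s.Nonempty := by
    obtain ⟨a, ha⟩ := Filter.eventually_atTop.mp (hF.2.2.2.2.eventually (lt_mem_nhds hy1))
    exact ⟨a, le_of_lt (ha a le_rfl)⟩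
  have hbdd : BddBelow s := bddBelow_aux hF hy0
  have hx : sInf s ∈ closure s := csInf_mem_closure hne hbdd
  haveI : (𝓝[s] (sInf s)).NeBot := mem_closure_iff_nhdsWithin_neBot.mp hx
  have hcont : Tendsto F (𝓝[s] (sInf s)) (𝓝 (F (sInf s))) :=
    (hF.2.1 (sInf s)).mono (fun t ht => csInf_le hbdd ht)
  exact ge_of_tendsto hcont (eventually_mem_nhdsWithin.mono fun t ht => ht.out)

/-- If `U ~ C`, a copula (probability measure on `[0,1]^d` with uniform margins), and
`X = (F₁^←(U₁),…,F_d^←(U_d))`, then `P(X₁+⋯+X_d ≤ t) = C(⟨T(A_t)⟩)`. -/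
theorem stmt1 (d : ℕ) (C : Measure (Fin d → ℝ)) [IsProbabilityMeasure C]
    (hsupp : C (Set.Icc (0 : Fin d → ℝ) 1) = 1)
    (hmarg : ∀ i : Fin d, ∀ a ∈ Set.Icc (0:ℝ) 1,
      C {u : Fin d → ℝ | u i ≤ a} = ENNReal.ofReal a)
    (F : Fin d → ℝ → ℝ) (hF : ∀ i, IsDistFun (F i)) (t : ℝ) :
    C {u : Fin d → ℝ | ∑ i, quantile (F i) (u i) ≤ t}
      = C (lowerLayer ((fun x i => F i (x i)) '' sumLev d t)) := by
  have hmeas : ∀ (i : Fin d) (a : ℝ), MeasurableSet {u : Fin d → ℝ | u i ≤ a} :=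
    fun i a => measurableSet_le (measurable_pi_apply i) measurable_const
  have h0 : ∀ i, C {u : Fin d → ℝ | u i ≤ 0} = 0 := fun i => by
    simpa using hmarg i 0 ⟨le_rfl, zero_le_one⟩
  have hcube : C (Set.Icc (0 : Fin d → ℝ) 1)ᶜ = 0 := by
    rw [measure_compl measurableSet_Icc (measure_ne_top C _), hsupp, measure_univ, tsub_self]
  have h1 : ∀ i, C {u : Fin d → ℝ | u i = 1} = 0 := by
    intro i
    refine nonpos_iff_eq_zero.mp (ge_of_tendsto
      (by simpa using ENNReal.tendsto_ofReal tendsto_one_div_add_atTop_nhds_zero_nat) ?_)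
    refine Filter.Eventually.of_forall fun n => ?_
    have hn0 : (0:ℝ) < 1 / (n + 1) := by positivity
    have hn1 : (1:ℝ) / (n + 1) ≤ 1 := by
      rw [div_le_one (by positivity)]; linarith [Nat.cast_nonneg (α := ℝ) n]
    have ha : (1 - 1/(n+1) : ℝ) ∈ Set.Icc (0:ℝ) 1 := ⟨by linarith, by linarith⟩
    have hsub : {u : Fin d → ℝ | u i = 1} ⊆
        {u | u i ≤ 1} \ {u | u i ≤ 1 - 1/(n+1)} := by
      intro u hu
      exact ⟨le_of_eq hu, by simp only [mem_setOf_eq, hu.out]; linarith⟩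
    calc C {u : Fin d → ℝ | u i = 1}
        ≤ C ({u | u i ≤ 1} \ {u | u i ≤ 1 - 1/(n+1)}) := measure_mono hsub
      _ = C {u : Fin d → ℝ | u i ≤ 1} - C {u : Fin d → ℝ | u i ≤ 1 - 1/(n+1)} :=
          measure_diff (fun u hu => le_trans hu.out (by linarith))
            (hmeas i _).nullMeasurableSet (measure_ne_top C _)
      _ = ENNReal.ofReal 1 - ENNReal.ofReal (1 - 1/(n+1)) := by
          rw [hmarg i 1 ⟨zero_le_one, le_rfl⟩, hmarg i _ ha]
      _ = ENNReal.ofReal (((n:ℝ)+1)⁻¹) := by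
          rw [← ENNReal.ofReal_sub 1 ha.1]; norm_num
  have hae : ∀ᵐ u ∂C, ∀ i, 0 < u i ∧ u i < 1 := by
    rw [MeasureTheory.ae_all_iff]
    intro i
    have hA : ∀ᵐ u ∂C, 0 < u i := by
      rw [ae_iff]
      simpa only [not_lt] using h0 i
    have hB : ∀ᵐ u ∂C, u i < 1 := by
      rw [ae_iff]
      have hss : {u : Fin d → ℝ | ¬ u i < 1} ⊆
          {u : Fin d → ℝ | u i = 1} ∪ (Set.Icc (0 : Fin d → ℝ) 1)ᶜ := by
        intro u hu
        rcases le_or_gt (u i) 1 with h | h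
        · exact Or.inl (le_antisymm h (not_lt.mp hu))
        · exact Or.inr fun hc => absurd (hc.2 i) (not_le.mpr h)
      exact measure_mono_null hss (measure_union_null (h1 i) hcube)
    exact hA.and hB
  refine measure_congr (Filter.eventuallyEq_set.mpr ?_)
  filter_upwards [hae] with u hu
  constructor
  · intro hsum
    refine Set.mem_iUnion₂.mpr ⟨fun i => F i (quantile (F i) (u i)),
      ⟨fun i => quantile (F i) (u i), hsum, rfl⟩, ?_, ?_⟩
    · exact fun i => (hu i).1.le
    · exact fun i => le_apply_quantile (hF i) (hu i).1 (hu i).2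
  · intro hmem
    obtain ⟨v, hv, huv⟩ := Set.mem_iUnion₂.mp hmem
    obtain ⟨x, hx, rfl⟩ := hv
    calc ∑ i, quantile (F i) (u i) ≤ ∑ i, x i :=
          Finset.sum_le_sum fun i _ => quantile_le (hF i) (hu i).1 (huv.2 i)
      _ ≤ t := hx
end

section
/- Let A ⊆ [0,1]^d and let ⟨A⟩ = ⋃_{u∈A}[0,u] be its lower layer. Then the topological boundary of ⟨A⟩ (relative to ℝ^d) has d-dimensional Lebesgue measure zero. -/
open Set MeasureTheory

/-- The topological boundary of a lower layer of a subset of `[0,1]^d` is Lebesgue-null. -/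
theorem stmt3 (d : ℕ) (A : Set (Fin d → ℝ)) (hA : A ⊆ Set.Icc 0 1) :
    volume (frontier (lowerLayer A)) = 0 := by
  have h : (lowerLayer A).OrdConnected := by
    constructor
    intro x hx y hy z hz
    simp only [lowerLayer, mem_iUnion, mem_Icc] at hx hy ⊢
    obtain ⟨u, hu, hx0, hxu⟩ := hx
    obtain ⟨v, hv, hy0, hyv⟩ := hy
    exact ⟨v, hv, le_trans hx0 hz.1, le_trans hz.2 hyv⟩
  exact h.null_frontier
end

section
/- Let B ⊆ [0,1]^d be a lower set (u ∈ B and v ≤ u componentwise implies v ∈ B), let δ > 0, and let U_δ(∂⁺B) be the closed δ-neighbourhood (in Euclidean distance, intersected with [0,1]^d) of the upper boundary ∂⁺B = {x ∈ cl(B) : ∀ε>0, x + ε(1,…,1) ∉ cl(B)}. Then the Lebesgue measure of U_δ(∂⁺B) is at most 2dδ. -/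
/-!
Let `A` be the lower closure of `B` in `ℝ^d`. For `δ' > δ`, every point within distance `δ` of
the upper boundary lies in the half-open diagonal strip `S = {u | u - δ' • 1 ∈ A, u + δ' • 1 ∉ A}`.
In the corner cube `Q = [2δ', 1]^d`, the part outside `A + δ' • 1` and the translate by
`-2δ' • 1` of the part inside it lie in `[0,1]^d` and are disjoint from `S` and, `A` being a lower
set, from each other. Hence `vol ([0,1]^d ∩ S) ≤ 1 - (1 - 2δ')^d ≤ 2dδ'` by Bernoulli's
inequality; let `δ' ↓ δ`.
-/

open Set MeasureTheory

/-- The "upper" boundary of a set `B ⊆ [0,1]^d`: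
`{x ∈ cl(B) : ∀ ε > 0, x + ε(1,…,1) ∉ cl(B)}`. -/
def upperBoundary {d : ℕ} (B : Set (Fin d → ℝ)) : Set (Fin d → ℝ) :=
  {x ∈ closure B | ∀ ε : ℝ, 0 < ε → x + ε • (1 : Fin d → ℝ) ∉ closure B}

/-- Closed δ-neighbourhood in Euclidean distance of `S`, intersected with `[0,1]^d`. -/
def eNbhd {d : ℕ} (S : Set (Fin d → ℝ)) (δ : ℝ) : Set (Fin d → ℝ) :=
  {u ∈ Set.Icc (0 : Fin d → ℝ) 1 |
    ∃ v ∈ S, Real.sqrt (∑ i, (u i - v i) ^ 2) ≤ δ}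

section DiagonalStrip

variable {ι : Type*} [Fintype ι]

def diagonalStrip (A : Set (ι → ℝ)) (δ : ℝ) : Set (ι → ℝ) :=
  {u | u - δ • 1 ∈ A ∧ u + δ • 1 ∉ A}

lemma volume_Icc_inter_diagonalStrip_add_le {A : Set (ι → ℝ)} (hA : IsLowerSet A) {δ : ℝ}
    (hδ : 0 ≤ δ) :
    volume (Icc 0 1 ∩ diagonalStrip A δ) + ENNReal.ofReal (1 - 2 * δ) ^ Fintype.card ι ≤ 1 := by
  set τ : ι → ℝ := (2 * δ) • 1
  set P : Set (ι → ℝ) := (· - δ • 1) ⁻¹' A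
  set Q : Set (ι → ℝ) := Icc τ 1
  set S := Icc 0 1 ∩ diagonalStrip A δ
  set T : Set (ι → ℝ) := (· + τ) ⁻¹' (Q ∩ P)
  have hP : IsLowerSet P := hA.preimage fun _ _ h => sub_le_sub_right h _
  have hτ : 0 ≤ τ := smul_nonneg (by linarith) zero_le_one
  have hshift (u : ι → ℝ) : u + τ - δ • 1 = u + δ • 1 := by
    simp only [τ]; module
  have hvolQ : volume Q = ENNReal.ofReal (1 - 2 * δ) ^ Fintype.card ι := by
    simp [Q, τ, Real.volume_Icc_pi]
  have hvolT : volume T = volume (Q ∩ P) := measure_preimage_add_right _ _ _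
  -- A lower set need not be Borel, but order-connected sets in `ℝ^ι` are null-measurable.
  have hQP_meas : NullMeasurableSet (Q \ P) :=
    (ordConnected_Icc.inter hP.compl.ordConnected).nullMeasurableSet
  have hT_meas : NullMeasurableSet T :=
    (ordConnected_Icc.inter hP.ordConnected).nullMeasurableSet.preimage
      (measurePreserving_add_right volume τ).quasiMeasurePreserving
  have hSQ : Disjoint S (Q \ P) :=
    disjoint_left.2 fun _ hu hu' => hu'.2 hu.2.1
  have hST : Disjoint S T := disjoint_left.2 fun _ hu hu' =>
    hu.2.2 (by simpa [P, hshift] using hu'.2)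
  have hQT : Disjoint (Q \ P) T := disjoint_left.2 fun u hu hu' => by
    have hδ1 : 0 ≤ δ • (1 : ι → ℝ) := smul_nonneg hδ zero_le_one
    refine hu.2 (hA ((sub_le_self u hδ1).trans (le_add_of_nonneg_right hδ1)) ?_)
    simpa [P, hshift] using hu'.2
  have hcube : S ∪ Q \ P ∪ T ⊆ Icc 0 1 := by
    refine union_subset (union_subset inter_subset_left ?_) fun u hu => ?_
    · exact fun u hu => ⟨hτ.trans hu.1.1, hu.1.2⟩
    · obtain ⟨h0, h1⟩ := hu.1
      exact ⟨by simpa using h0, (le_add_of_nonneg_right hτ).trans h1⟩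
  rw [← hvolQ]
  calc volume S + volume Q
      ≤ volume S + (volume (Q ∩ P) + volume (Q \ P)) := by
        gcongr; exact measure_le_inter_add_sdiff _ _ _
    _ = volume (S ∪ Q \ P ∪ T) := by
        rw [measure_union₀ hT_meas (hST.union_left hQT).aedisjoint,
          measure_union₀ hQP_meas hSQ.aedisjoint, hvolT]
        ring
    _ ≤ volume (Icc (0 : ι → ℝ) 1) := measure_mono hcube
    _ = 1 := by simp [Real.volume_Icc_pi]

lemma one_le_ofReal_mul_add_ofReal_pow (n : ℕ) {δ : ℝ} (hδ : 0 ≤ δ) :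
    1 ≤ ENNReal.ofReal (2 * n * δ) + ENNReal.ofReal (1 - 2 * δ) ^ n := by
  rcases le_or_gt (2 * δ) 1 with hδ1 | hδ1
  · rw [← ENNReal.ofReal_pow (by linarith), ← ENNReal.ofReal_add (by positivity)
      (pow_nonneg (by linarith) n), ENNReal.one_le_ofReal]
    have := one_add_mul_le_pow (show -2 ≤ -(2 * δ) by linarith) n
    rw [← sub_eq_add_neg] at this
    linarith
  · rcases n.eq_zero_or_pos with rfl | hn
    · simp
    · refine le_add_right (ENNReal.one_le_ofReal.2 ?_)
      have : (1 : ℝ) ≤ n := Nat.one_le_cast.2 hn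
      nlinarith

lemma volume_Icc_inter_diagonalStrip_le {A : Set (ι → ℝ)} (hA : IsLowerSet A) {δ : ℝ}
    (hδ : 0 ≤ δ) :
    volume (Icc 0 1 ∩ diagonalStrip A δ) ≤ ENNReal.ofReal (2 * Fintype.card ι * δ) := by
  have hpow : ENNReal.ofReal (1 - 2 * δ) ^ Fintype.card ι ≠ ⊤ :=
    ENNReal.pow_ne_top ENNReal.ofReal_ne_top
  exact (ENNReal.add_le_add_iff_right hpow).1 <|
    (volume_Icc_inter_diagonalStrip_add_le hA hδ).trans
      (one_le_ofReal_mul_add_ofReal_pow _ hδ)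

end DiagonalStrip

lemma abs_sub_le_of_sqrt_sum_sq_sub_le {ι : Type*} [Fintype ι] {u v : ι → ℝ} {δ : ℝ}
    (h : √(∑ i, (u i - v i) ^ 2) ≤ δ) (i : ι) : |u i - v i| ≤ δ :=
  (Real.abs_le_sqrt <| Finset.single_le_sum (f := fun j => (u j - v j) ^ 2)
    (fun _ _ => sq_nonneg _) (Finset.mem_univ i)).trans h

lemma eNbhd_upperBoundary_subset {d : ℕ} {B : Set (Fin d → ℝ)} (hBsub : B ⊆ Icc 0 1)
    (hlow : ∀ u ∈ B, ∀ v ∈ Icc (0 : Fin d → ℝ) 1, v ≤ u → v ∈ B) {δ δ' : ℝ} (hδδ' : δ < δ') :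
    eNbhd (upperBoundary B) δ ⊆ Icc 0 1 ∩ diagonalStrip (lowerClosure B) δ' := by
  rintro u ⟨hu, v, ⟨hvB, hv_top⟩, huv⟩
  have hclose (i : Fin d) : |u i - v i| ≤ δ := abs_sub_le_of_sqrt_sum_sq_sub_le huv i
  refine ⟨hu, ?_, ?_⟩
  · obtain ⟨b, hb, hvb⟩ := Metric.mem_closure_iff.1 hvB (δ' - δ) (by linarith)
    refine mem_lowerClosure.2 ⟨b, hb, fun i => ?_⟩
    have hvb_i : |v i - b i| < δ' - δ := by
      rw [← Real.dist_eq]; exact (dist_le_pi_dist v b i).trans_lt hvb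
    have := (abs_le.1 (hclose i)).2
    have := (abs_lt.1 hvb_i).2
    simp only [Pi.sub_apply, Pi.smul_apply, Pi.one_apply, smul_eq_mul, mul_one]
    linarith
  · rintro ⟨b, hb, hub⟩
    have hvb : v + (δ' - δ) • 1 ≤ b := fun i => by
      have := (abs_le.1 (hclose i)).1
      have := hub i
      simp only [Pi.add_apply, Pi.smul_apply, Pi.one_apply, smul_eq_mul, mul_one] at this ⊢
      linarith
    have hv0 : 0 ≤ v := (closure_minimal hBsub isClosed_Icc hvB).1
    refine hv_top (δ' - δ) (by linarith) (subset_closure (hlow b hb _ ⟨?_, ?_⟩ hvb))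
    · exact add_nonneg hv0 (smul_nonneg (by linarith) zero_le_one)
    · exact hvb.trans (hBsub hb).2

/-- For a lower set `B ⊆ [0,1]^d`, the Lebesgue measure of the closed δ-neighbourhood
of its upper boundary is at most `2dδ`. -/
theorem stmt4 (d : ℕ) (B : Set (Fin d → ℝ)) (hBsub : B ⊆ Set.Icc 0 1)
    (hlow : ∀ u ∈ B, ∀ v ∈ Set.Icc (0 : Fin d → ℝ) 1, v ≤ u → v ∈ B)
    (δ : ℝ) (hδ : 0 < δ) :
    volume (eNbhd (upperBoundary B) δ) ≤ ENNReal.ofReal (2 * d * δ) := by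
  have hbound (δ' : ℝ) (hδ' : δ < δ') :
      volume (eNbhd (upperBoundary B) δ) ≤ ENNReal.ofReal (2 * d * δ') := by
    simpa using (measure_mono (eNbhd_upperBoundary_subset hBsub hlow hδ')).trans
      (volume_Icc_inter_diagonalStrip_le (lowerClosure B).lower (hδ.trans hδ').le)
  have hcont : Continuous fun δ' : ℝ => ENNReal.ofReal (2 * d * δ') :=
    ENNReal.continuous_ofReal.comp (continuous_const.mul continuous_id)
  exact ge_of_tendsto (hcont.continuousAt.mono_left nhdsWithin_le_nhds)
    (eventually_nhdsWithin_of_forall (s := Ioi δ) hbound)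
end

section
/- Let H₂ denote the collection of closed lower layers in [0,1]², i.e., closed sets B ⊆ [0,1]² with ⟨B⟩ = B, and let Λ₂ = {u ∈ [0,1]² : u₁u₂ = 0}. For every B ∈ H₂ there exist probability distribution functions F₁, F₂ on ℝ such that, with T(x) = (F₁(x₁), F₂(x₂)) and A₀ = {x ∈ ℝ² : x₁ + x₂ ≤ 0}, one has ⟨T(A₀)⟩ = B ∪ Λ₂. -/
/-!
With `C = B ∪ Λ₂`, let `g a = sup {s | (a, s) ∈ C}` be the height of `C` over `a`. Because `C` is a
closed lower layer, `{a | c ≤ g a}` is the horizontal section of `C` at height `c > 0`, so `g` is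
upper semicontinuous; it is also antitone on `[0, ∞)` with `g 0 = 1`. Thus `F₂ t = g (max (-t) 0)`
is monotone and upper semicontinuous, hence right-continuous. With `F₁` the clamp to `[0, 1]`, `T`
maps the line `x₁ + x₂ = 0` onto the upper boundary `{(a, g a)}` of `C` (up to points of `Λ₂`), and
every point of `T(A₀)` lies below a point of that boundary.
-/

open Set

open Filter Topology

section LowerLayer

variable {d : ℕ} {B C : Set (Fin d → ℝ)}

theorem mem_lowerLayer {w : Fin d → ℝ} : w ∈ lowerLayer B ↔ ∃ u ∈ B, 0 ≤ w ∧ w ≤ u := by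
  simp only [lowerLayer, mem_iUnion₂, mem_Icc, exists_prop]

theorem lowerLayer_mono (h : B ⊆ C) : lowerLayer B ⊆ lowerLayer C :=
  biUnion_subset_biUnion_left h

theorem lowerLayer_union : lowerLayer (B ∪ C) = lowerLayer B ∪ lowerLayer C :=
  biUnion_union B C _

theorem mem_of_lowerLayer_eq (hC : lowerLayer C = C) {u w : Fin d → ℝ} (hu : u ∈ C) (h0 : 0 ≤ w)
    (hw : w ≤ u) : w ∈ C :=
  hC ▸ mem_lowerLayer.2 ⟨u, hu, h0, hw⟩

end LowerLayer

section SquareAxes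

def squareAxes : Set (Fin 2 → ℝ) := {u ∈ Icc 0 1 | u 0 * u 1 = 0}

theorem isClosed_squareAxes : IsClosed squareAxes :=
  isClosed_Icc.inter (isClosed_eq (by fun_prop) continuous_const)

theorem lowerLayer_squareAxes : lowerLayer squareAxes = squareAxes := by
  refine Subset.antisymm (fun w hw => ?_) fun u hu => mem_lowerLayer.2 ⟨u, hu, hu.1.1, le_rfl⟩
  obtain ⟨u, ⟨hu01, hu⟩, h0, hw⟩ := mem_lowerLayer.1 hw
  refine ⟨⟨h0, hw.trans hu01.2⟩, ?_⟩
  rcases mul_eq_zero.1 hu with h | h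
  · exact mul_eq_zero.2 (Or.inl (le_antisymm (by simpa [h] using hw 0) (by simpa using h0 0)))
  · exact mul_eq_zero.2 (Or.inr (le_antisymm (by simpa [h] using hw 1) (by simpa using h0 1)))

theorem vec_mem_squareAxes {p q : ℝ} (hp : p ∈ Icc 0 1) (hq : q ∈ Icc 0 1) (h : p * q = 0) :
    ![p, q] ∈ squareAxes :=
  ⟨by simp_all [Pi.le_def, Fin.forall_fin_two], by simpa using h⟩

end SquareAxes

section SectionSup

noncomputable def sectionSup (C : Set (Fin 2 → ℝ)) (a : ℝ) : ℝ := sSup {s | ![a, s] ∈ C}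

variable {C : Set (Fin 2 → ℝ)} {a c s : ℝ}

theorem mem_Icc_of_vec_mem (hsub : C ⊆ Icc 0 1) (h : ![a, s] ∈ C) :
    a ∈ Icc 0 1 ∧ s ∈ Icc 0 1 := by
  have := hsub h
  simp_all [Pi.le_def, Fin.forall_fin_two]

theorem bddAbove_setOf_vec_mem (hsub : C ⊆ Icc 0 1) (a : ℝ) : BddAbove {s | ![a, s] ∈ C} :=
  ⟨1, fun _ hs => (mem_Icc_of_vec_mem hsub hs).2.2⟩

theorem le_sectionSup (hsub : C ⊆ Icc 0 1) (h : ![a, s] ∈ C) : s ≤ sectionSup C a :=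
  le_csSup (bddAbove_setOf_vec_mem hsub a) h

theorem sectionSup_nonneg (hsub : C ⊆ Icc 0 1) (a : ℝ) : 0 ≤ sectionSup C a :=
  Real.sSup_nonneg fun _ hs => (mem_Icc_of_vec_mem hsub hs).2.1

theorem sectionSup_le_one (hsub : C ⊆ Icc 0 1) (a : ℝ) : sectionSup C a ≤ 1 :=
  Real.sSup_le (fun _ hs => (mem_Icc_of_vec_mem hsub hs).2.2) zero_le_one

theorem sectionSup_of_one_lt (hsub : C ⊆ Icc 0 1) (ha : 1 < a) : sectionSup C a = 0 := by
  have : {s | ![a, s] ∈ C} = ∅ :=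
    eq_empty_of_forall_notMem fun _ hs => (mem_Icc_of_vec_mem hsub hs).1.2.not_gt ha
  rw [sectionSup, this, Real.sSup_empty]

theorem sectionSup_zero (hsub : C ⊆ Icc 0 1) (h : ![0, 1] ∈ C) : sectionSup C 0 = 1 :=
  (sectionSup_le_one hsub 0).antisymm (le_sectionSup hsub h)

theorem vec_sectionSup_mem (hsub : C ⊆ Icc 0 1) (hC : IsClosed C) (h : ![a, s] ∈ C) :
    ![a, sectionSup C a] ∈ C :=
  (hC.preimage (by fun_prop) : IsClosed {s | ![a, s] ∈ C}).csSup_mem ⟨s, h⟩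
    (bddAbove_setOf_vec_mem hsub a)

theorem le_sectionSup_iff (hsub : C ⊆ Icc 0 1) (hC : IsClosed C) (hlow : lowerLayer C = C)
    (hc : 0 < c) : c ≤ sectionSup C a ↔ ![a, c] ∈ C := by
  refine ⟨fun h => ?_, le_sectionSup hsub⟩
  obtain ⟨s, hs⟩ : {s | ![a, s] ∈ C}.Nonempty := by
    refine nonempty_iff_ne_empty.2 fun hne => ?_
    rw [sectionSup, hne, Real.sSup_empty] at h
    exact hc.not_ge h
  refine mem_of_lowerLayer_eq hlow (vec_sectionSup_mem hsub hC hs) ?_ ?_ <;>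
    simp [Pi.le_def, Fin.forall_fin_two, (mem_Icc_of_vec_mem hsub hs).1.1, hc.le, h]

theorem sectionSup_antitoneOn (hsub : C ⊆ Icc 0 1) (hC : IsClosed C) (hlow : lowerLayer C = C) :
    AntitoneOn (sectionSup C) (Ici 0) := by
  intro a ha b _ hab
  rcases (sectionSup_nonneg hsub b).eq_or_lt with hb | hb
  · exact hb ▸ sectionSup_nonneg hsub a
  have hbmem := (le_sectionSup_iff hsub hC hlow hb).1 le_rfl
  refine le_sectionSup hsub (mem_of_lowerLayer_eq hlow hbmem ?_ ?_) <;>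
    simp [Pi.le_def, Fin.forall_fin_two, mem_Ici.1 ha, hb.le, hab]

theorem sectionSup_upperSemicontinuous (hsub : C ⊆ Icc 0 1) (hC : IsClosed C)
    (hlow : lowerLayer C = C) : UpperSemicontinuous (sectionSup C) := by
  refine upperSemicontinuous_iff_isClosed_preimage.2 fun c => ?_
  rcases le_or_gt c 0 with hc | hc
  · convert isClosed_univ
    exact eq_univ_of_forall fun a => hc.trans (sectionSup_nonneg hsub a)
  · have : sectionSup C ⁻¹' Ici c = {a | ![a, c] ∈ C} :=
      ext fun a => le_sectionSup_iff hsub hC hlow hc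
    rw [this]
    exact hC.preimage (by fun_prop)

end SectionSup

section DistFun

theorem Monotone.continuousWithinAt_Ici_of_upperSemicontinuousAt {α β : Type*}
    [TopologicalSpace α] [Preorder α] [TopologicalSpace β] [LinearOrder β] [OrderTopology β]
    {f : α → β} {x : α} (hf : Monotone f) (hu : UpperSemicontinuousAt f x) :
    ContinuousWithinAt f (Ici x) x :=
  tendsto_order.2 ⟨fun _ hb => eventually_nhdsWithin_of_forall fun _ ht => hb.trans_le (hf ht),
    fun b hb => nhdsWithin_le_nhds (hu b hb)⟩

theorem isDistFun_of_upperSemicontinuous {F : ℝ → ℝ} (hmono : Monotone F)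
    (husc : UpperSemicontinuous F) (hrange : ∀ t, F t ∈ Icc 0 1)
    (hbot : F =ᶠ[atBot] fun _ => 0) (htop : F =ᶠ[atTop] fun _ => 1) : IsDistFun F :=
  ⟨hmono, fun x => hmono.continuousWithinAt_Ici_of_upperSemicontinuousAt (husc x), hrange,
    tendsto_const_nhds.congr' hbot.symm, tendsto_const_nhds.congr' htop.symm⟩

noncomputable def unitClamp (t : ℝ) : ℝ := projIcc 0 1 zero_le_one t

theorem unitClamp_of_mem {t : ℝ} (ht : t ∈ Icc 0 1) : unitClamp t = t := by
  simp [unitClamp, projIcc_of_mem _ ht]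

theorem monotone_unitClamp : Monotone unitClamp :=
  fun _ _ h => monotone_projIcc zero_le_one h

theorem isDistFun_unitClamp : IsDistFun unitClamp := by
  refine isDistFun_of_upperSemicontinuous monotone_unitClamp
    (continuous_subtype_val.comp continuous_projIcc).upperSemicontinuous
    (fun t => (projIcc 0 1 zero_le_one t).2) ?_ ?_
  · filter_upwards [eventually_le_atBot 0] with t ht
    simp [unitClamp, projIcc_of_le_left _ ht]
  · filter_upwards [eventually_ge_atTop 1] with t ht
    simp [unitClamp, projIcc_of_right_le _ ht]

/-- For `t < -1` the section is empty, so this is the junk value `sSup ∅ = 0`. -/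
noncomputable def boundaryDistFun (C : Set (Fin 2 → ℝ)) (t : ℝ) : ℝ := sectionSup C (max (-t) 0)

variable {C : Set (Fin 2 → ℝ)}

theorem isDistFun_boundaryDistFun (hsub : C ⊆ Icc 0 1) (hC : IsClosed C)
    (hlow : lowerLayer C = C) (h01 : ![0, 1] ∈ C) : IsDistFun (boundaryDistFun C) := by
  refine isDistFun_of_upperSemicontinuous ?_
    ((sectionSup_upperSemicontinuous hsub hC hlow).comp (by fun_prop))
    (fun t => ⟨sectionSup_nonneg hsub _, sectionSup_le_one hsub _⟩) ?_ ?_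
  · intro s t hst
    exact sectionSup_antitoneOn hsub hC hlow (mem_Ici.2 (le_max_right _ _))
      (mem_Ici.2 (le_max_right _ _)) (max_le_max_right 0 (neg_le_neg hst))
  · filter_upwards [eventually_lt_atBot (-1)] with t ht
    exact sectionSup_of_one_lt hsub (lt_max_of_lt_left (by linarith))
  · filter_upwards [eventually_ge_atTop 0] with t ht
    simp [boundaryDistFun, ht, sectionSup_zero hsub h01]

theorem vec_unitClamp_neg_mem (hsub : C ⊆ Icc 0 1) (hC : IsClosed C) (hΛ : squareAxes ⊆ C)
    (t : ℝ) : ![unitClamp (-t), boundaryDistFun C t] ∈ C := by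
  have hF₂ : boundaryDistFun C t ∈ Icc 0 1 := ⟨sectionSup_nonneg hsub _, sectionSup_le_one hsub _⟩
  rcases le_or_gt (-t) 0 with h0 | h0
  · have : unitClamp (-t) = 0 := by simp [unitClamp, projIcc_of_le_left _ h0]
    exact hΛ (vec_mem_squareAxes (by simp [this]) hF₂ (by simp [this]))
  rcases le_or_gt (-t) 1 with h1 | h1
  · rw [unitClamp_of_mem ⟨h0.le, h1⟩, boundaryDistFun, max_eq_left h0.le]
    exact vec_sectionSup_mem hsub hC
      (hΛ (vec_mem_squareAxes (q := 0) ⟨h0.le, h1⟩ (by simp) (by simp)))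
  · rw [boundaryDistFun, max_eq_left h0.le, sectionSup_of_one_lt hsub h1]
    have : unitClamp (-t) = 1 := by simp [unitClamp, projIcc_of_right_le _ h1.le]
    exact hΛ (vec_mem_squareAxes (by simp [this]) (by simp) (by simp))

theorem lowerLayer_image_eq (hsub : C ⊆ Icc 0 1) (hC : IsClosed C) (hlow : lowerLayer C = C)
    (hΛ : squareAxes ⊆ C) :
    lowerLayer ((fun x : Fin 2 → ℝ => ![unitClamp (x 0), boundaryDistFun C (x 1)]) ''
      {x | x 0 + x 1 ≤ 0}) = C := by
  refine Subset.antisymm ((lowerLayer_mono ?_).trans hlow.le) fun y hy => ?_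
  · rintro _ ⟨x, hx, rfl⟩
    refine mem_of_lowerLayer_eq hlow (vec_unitClamp_neg_mem hsub hC hΛ (x 1)) ?_ ?_
    · simp [Pi.le_def, Fin.forall_fin_two, (projIcc 0 1 zero_le_one (x 0)).2.1,
        sectionSup_nonneg hsub, boundaryDistFun, unitClamp]
    · simpa [Pi.le_def, Fin.forall_fin_two] using
        monotone_unitClamp (show x 0 ≤ -x 1 by linarith [show x 0 + x 1 ≤ 0 from hx])
  · have hy' : ![y 0, y 1] ∈ C := by
      convert hy using 1
      ext i; fin_cases i <;> rfl
    obtain ⟨hy0, -⟩ := mem_Icc_of_vec_mem hsub hy'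
    refine mem_lowerLayer.2 ⟨_, ⟨![y 0, -y 0], by simp, rfl⟩, (hsub hy).1, ?_⟩
    simp [Pi.le_def, Fin.forall_fin_two, unitClamp_of_mem hy0, boundaryDistFun,
      max_eq_left hy0.1, le_sectionSup hsub hy']

end DistFun

/-- Every closed lower layer `B` in `[0,1]²` arises, up to the null set
`Λ₂ = {u : u₁u₂ = 0}`, as `⟨T(A₀)⟩` for suitable distribution functions `F₁, F₂`. -/
theorem stmt5 (B : Set (Fin 2 → ℝ)) (hBsub : B ⊆ Set.Icc 0 1) (hBcl : IsClosed B)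
    (hBlow : lowerLayer B = B) :
    ∃ F₁ F₂ : ℝ → ℝ, IsDistFun F₁ ∧ IsDistFun F₂ ∧
      lowerLayer ((fun x : Fin 2 → ℝ => ![F₁ (x 0), F₂ (x 1)]) ''
          {x : Fin 2 → ℝ | x 0 + x 1 ≤ 0})
        = B ∪ {u ∈ Set.Icc (0 : Fin 2 → ℝ) 1 | u 0 * u 1 = 0} := by
  have hsub : B ∪ squareAxes ⊆ Icc 0 1 := union_subset hBsub (sep_subset _ _)
  have hcl : IsClosed (B ∪ squareAxes) := hBcl.union isClosed_squareAxes
  have hlow : lowerLayer (B ∪ squareAxes) = B ∪ squareAxes := by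
    rw [lowerLayer_union, hBlow, lowerLayer_squareAxes]
  have hΛ : squareAxes ⊆ B ∪ squareAxes := subset_union_right
  have h01 : ![0, 1] ∈ B ∪ squareAxes := hΛ (vec_mem_squareAxes (by simp) (by simp) (by simp))
  exact ⟨unitClamp, boundaryDistFun (B ∪ squareAxes), isDistFun_unitClamp,
    isDistFun_boundaryDistFun hsub hcl hlow h01, lowerLayer_image_eq hsub hcl hlow hΛ⟩
end

section
/- Let C_n be the empirical distribution function of n distinct points in [0,1] and C_n^← its quantile function. Then ‖C_n^← − id‖_∞ = ‖C_n − id‖_∞, where id is the identity on [0,1] and ‖·‖_∞ is the supremum norm on [0,1]. -/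
/-!
On `[0,1]` the quantile function `Q` and the distribution function `F` form a Galois connection
`Q t ≤ v ↔ t ≤ F v`: since `F` is monotone and upper semicontinuous, the infimum defining `Q t`
is attained. For any Galois connection `l ⊣ u` on `[0,1]`, `sup |l - id| ≤ sup |u - id|`:
`t ≤ u (l t)` bounds `t - l t`, and `u c < t` for every `c < l t` bounds `l t - t`.
Conjugating by the reflection `x ↦ 1 - x` swaps the roles of `l` and `u`, which gives the
reverse inequality.
-/

open Set

/-- Empirical distribution function of the points `u 1, …, u n`. -/
noncomputable def empCdf (n : ℕ) (u : Fin n → ℝ) (v : ℝ) : ℝ :=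
  (1 / n : ℝ) * (Finset.univ.filter (fun k => u k ≤ v)).card

/-- Quantile function of the empirical distribution, as a map `[0,1] → [0,1]`. -/
noncomputable def empQuantile (n : ℕ) (u : Fin n → ℝ) (y : ℝ) : ℝ :=
  sInf {v ∈ Set.Icc (0:ℝ) 1 | y ≤ empCdf n u v}

open unitInterval

theorem unitInterval.abs_coe_symm_sub_coe_symm (a b : I) :
    |(σ a : ℝ) - σ b| = |(a : ℝ) - b| := by
  rw [coe_symm_eq, coe_symm_eq, sub_sub_sub_cancel_left, abs_sub_comm]

namespace GaloisConnection

variable {l u : I → I}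

theorem abs_sub_le_of_forall_abs_sub_le (gc : GaloisConnection l u) {A : ℝ}
    (hu : ∀ v, |(u v : ℝ) - v| ≤ A) (t : I) : |(l t : ℝ) - t| ≤ A := by
  have hA : 0 ≤ A := (abs_nonneg _).trans (hu 0)
  rw [abs_sub_le_iff]
  constructor
  · rw [sub_le_iff_le_add']
    refine forall_lt_imp_le_iff_le_of_dense.1 fun c hc => ?_
    rcases le_or_gt c t with hct | htc
    · linarith
    · let v : I := ⟨c, t.2.1.trans htc.le, hc.le.trans (l t).2.2⟩
      have huv : (u v : ℝ) < t := gc.lt_iff_lt.1 (show v < l t from hc)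
      have hv : c - u v ≤ A := (abs_sub_le_iff.1 (hu v)).2
      linarith
  · have hlu : (t : ℝ) ≤ u (l t) := gc.le_u_l t
    have hl : (u (l t) : ℝ) - l t ≤ A := (abs_sub_le_iff.1 (hu (l t))).1
    linarith

theorem symm_conj (gc : GaloisConnection l u) : GaloisConnection (σ ∘ u ∘ σ) (σ ∘ l ∘ σ) :=
  fun t v => by
    simp only [Function.comp_apply]
    rw [symm_le_comm, ← gc, le_symm_comm]

theorem abs_sub_le_of_forall_abs_sub_le' (gc : GaloisConnection l u) {B : ℝ}
    (hl : ∀ t, |(l t : ℝ) - t| ≤ B) (v : I) : |(u v : ℝ) - v| ≤ B := by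
  have h := gc.symm_conj.abs_sub_le_of_forall_abs_sub_le (A := B) (fun t => by
    have := hl (σ t)
    rwa [← abs_coe_symm_sub_coe_symm, symm_symm] at this) (σ v)
  rwa [Function.comp_apply, Function.comp_apply, symm_symm, abs_coe_symm_sub_coe_symm] at h

theorem iSup_abs_sub_eq (gc : GaloisConnection l u) :
    ⨆ t, |(l t : ℝ) - t| = ⨆ v, |(u v : ℝ) - v| := by
  have bdd : ∀ f : I → I, BddAbove (range fun t => |(f t : ℝ) - t|) := fun f =>
    ⟨1, by
      rintro _ ⟨t, rfl⟩
      exact abs_sub_le_iff.2 ⟨by linarith [le_one (f t), nonneg t],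
        by linarith [le_one t, nonneg (f t)]⟩⟩
  exact le_antisymm
    (ciSup_le <| gc.abs_sub_le_of_forall_abs_sub_le fun v => le_ciSup (bdd u) v)
    (ciSup_le <| gc.abs_sub_le_of_forall_abs_sub_le' fun t => le_ciSup (bdd l) t)

end GaloisConnection

noncomputable def quantileFun (F : ℝ → ℝ) (t : ℝ) : ℝ :=
  sInf {v ∈ I | t ≤ F v}

section quantileFun

variable {F : ℝ → ℝ} {t : ℝ}

theorem quantileFun_mem (hF : UpperSemicontinuous F) (h1 : t ≤ F 1) :
    quantileFun F t ∈ {v ∈ I | t ≤ F v} :=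
  (isClosed_Icc.inter (hF.isClosed_preimage t)).csInf_mem ⟨1, ⟨zero_le_one, le_rfl⟩, h1⟩
    ⟨0, fun _ hv => hv.1.1⟩

theorem quantileFun_le_iff (hFm : Monotone F) (hF : UpperSemicontinuous F) (h1 : t ≤ F 1)
    {v : ℝ} (hv : v ∈ I) : quantileFun F t ≤ v ↔ t ≤ F v :=
  ⟨fun h => (quantileFun_mem hF h1).2.trans (hFm h),
    fun h => csInf_le ⟨0, fun _ hw => hw.1.1⟩ ⟨hv, h⟩⟩

end quantileFun

section empirical

variable {n : ℕ} {u : Fin n → ℝ}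

theorem empCdf_eq_sum_indicator (v : ℝ) :
    empCdf n u v = ∑ k, (Ici (u k)).indicator (fun _ => (1 / n : ℝ)) v := by
  simp [empCdf, indicator_apply, Finset.sum_ite, mul_comm]

theorem upperSemicontinuous_empCdf : UpperSemicontinuous (empCdf n u) := by
  rw [funext empCdf_eq_sum_indicator]
  exact upperSemicontinuous_sum fun k _ =>
    isClosed_Ici.upperSemicontinuous_indicator (by positivity)

theorem monotone_empCdf : Monotone (empCdf n u) := by
  intro a b hab
  unfold empCdf
  gcongr

theorem empCdf_eq_one (hn : 0 < n) {v : ℝ} (hv : ∀ k, u k ≤ v) : empCdf n u v = 1 := by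
  simp [empCdf, hv, hn.ne']

theorem mapsTo_empCdf : MapsTo (empCdf n u) I I := fun v _ => by
  refine ⟨by unfold empCdf; positivity, ?_⟩
  rw [empCdf, one_div_mul_eq_div]
  exact div_le_one_of_le₀
    (by simpa using Finset.card_filter_le (Finset.univ : Finset (Fin n)) _) (by positivity)

-- `empQuantile n u` unfolds to `quantileFun (empCdf n u)`.
theorem mapsTo_empQuantile (hn : 0 < n) (hu : ∀ k, u k ≤ 1) : MapsTo (empQuantile n u) I I :=
  fun _ ht => (quantileFun_mem upperSemicontinuous_empCdf
    (by rw [empCdf_eq_one hn hu]; exact ht.2)).1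

theorem galoisConnection_empQuantile_empCdf (hn : 0 < n) (hu : ∀ k, u k ≤ 1) :
    GaloisConnection (mapsTo_empQuantile hn hu).restrict (mapsTo_empCdf (u := u)).restrict :=
  fun t v => quantileFun_le_iff monotone_empCdf upperSemicontinuous_empCdf
    (by rw [empCdf_eq_one hn hu]; exact t.2.2) v.2

end empirical

theorem stmt14_general (n : ℕ) (hn : 0 < n) (u : Fin n → ℝ)
    (hmem : ∀ k, u k ∈ Set.Ioo (0:ℝ) 1) :
    (⨆ t : Set.Icc (0:ℝ) 1, |empQuantile n u t - (t : ℝ)|)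
      = ⨆ t : Set.Icc (0:ℝ) 1, |empCdf n u t - (t : ℝ)| :=
  (galoisConnection_empQuantile_empCdf hn fun k => (hmem k).2.le).iSup_abs_sub_eq

/-- `‖C_n^← − id‖_∞ = ‖C_n − id‖_∞` on `[0,1]` for the empirical distribution of
`n` distinct points of `(0,1)`. -/
theorem stmt14 (n : ℕ) (hn : 0 < n) (u : Fin n → ℝ)
    (hinj : Function.Injective u) (hmem : ∀ k, u k ∈ Set.Ioo (0:ℝ) 1) :
    (⨆ t : Set.Icc (0:ℝ) 1, |empQuantile n u t - (t : ℝ)|)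
      = ⨆ t : Set.Icc (0:ℝ) 1, |empCdf n u t - (t : ℝ)| :=
  stmt14_general n hn u hmem
end
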